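/- For every integer M ≥ 1, every σ > 0, every s ≥ 0 and every i ∈ Fin M, the expectation term is bounded: −log₂ e ≤ g_i(σ, s) ≤ log₂ M. -/

import Mathlib

open MeasureTheory Real

/-- The standard complex Gaussian probability measure on ℂ:
density `w ↦ (1/π)·exp(−|w|²)` with respect to Lebesgue measure on ℂ ≅ ℝ². -/
noncomputable def gaussianC : Measure ℂ :=
  MeasureTheory.volume.withDensity
    (fun w => ENNReal.ofReal (π⁻¹ * Real.exp (-(‖w‖) ^ 2)))

/-- The expectation term
`g_i(σ, s) = ∫_ℂ log₂( Σ_j exp( −|σ·w + √s·(x i − x j)|² / σ² ) ) dγ(w)`. -/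
noncomputable def g (M : ℕ) (x : Fin M → ℂ) (σ s : ℝ) (i : Fin M) : ℝ :=
  ∫ w : ℂ,
    Real.logb 2 (∑ j : Fin M,
      Real.exp (-(‖(σ : ℂ) * w + (Real.sqrt s : ℂ) * (x i - x j)‖) ^ 2 / σ ^ 2))
    ∂gaussianC

/-- The constellation-constrained secrecy capacity
`C_σ(s) = (1/M)·Σ_i ( g_i(σ, s) − g_i(1, s) )`. -/
noncomputable def Ccc (M : ℕ) (x : Fin M → ℂ) (σ s : ℝ) : ℝ :=
  (1 / (M : ℝ)) * ∑ i : Fin M, (g M x σ s i - g M x 1 s i)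

/-! The `j = i` summand equals `exp (-|w|²)` and every summand is at most `1`, so
`-|w|² / log 2 ≤ log₂ (∑ⱼ …) ≤ log₂ M` pointwise. Integrating against `γ`, whose second moment
`∫ |w|² dγ` is `1`, gives the bounds; the same sandwich makes the integrand integrable. -/

lemma integral_exp_neg_norm_sq : ∫ w : ℂ, rexp (-‖w‖ ^ 2) = π := by
  have := Complex.integral_exp_neg_rpow (p := 2) one_le_two
  simp only [rpow_two] at this
  rw [this, show (2 : ℝ) / 2 + 1 = 2 by norm_num, Gamma_two, mul_one]

lemma integral_norm_sq_mul_exp_neg_norm_sq : ∫ w : ℂ, ‖w‖ ^ 2 * rexp (-‖w‖ ^ 2) = π := by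
  have := Complex.integral_rpow_mul_exp_neg_rpow (p := 2) (q := 2) one_le_two (by norm_num)
  simp only [rpow_two] at this
  rw [this, show ((2 : ℝ) + 2) / 2 = 2 by norm_num, Gamma_two]
  ring

lemma measurable_gaussianC_density :
    Measurable fun w : ℂ => ENNReal.ofReal (π⁻¹ * rexp (-‖w‖ ^ 2)) := by
  fun_prop

lemma integral_gaussianC (f : ℂ → ℝ) :
    ∫ w, f w ∂gaussianC = ∫ w, π⁻¹ * rexp (-‖w‖ ^ 2) * f w := by
  rw [gaussianC, integral_withDensity_eq_integral_toReal_smul measurable_gaussianC_density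
    (.of_forall fun _ => ENNReal.ofReal_lt_top)]
  simp only [smul_eq_mul, ENNReal.toReal_ofReal (by positivity : 0 ≤ π⁻¹ * rexp (-‖_‖ ^ 2))]

instance : IsProbabilityMeasure gaussianC := by
  constructor
  rw [gaussianC, withDensity_apply _ MeasurableSet.univ, setLIntegral_univ,
    ← ofReal_integral_eq_lintegral_ofReal _ (.of_forall fun _ => by positivity),
    integral_const_mul, integral_exp_neg_norm_sq, inv_mul_cancel₀ pi_ne_zero, ENNReal.ofReal_one]
  exact (Integrable.of_integral_ne_zero
    (by rw [integral_exp_neg_norm_sq]; exact pi_ne_zero)).const_mul _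

lemma integral_norm_sq_gaussianC : ∫ w, ‖w‖ ^ 2 ∂gaussianC = 1 := by
  simp_rw [integral_gaussianC, mul_assoc, integral_const_mul, mul_comm (rexp _),
    integral_norm_sq_mul_exp_neg_norm_sq, inv_mul_cancel₀ pi_ne_zero]

lemma integrable_norm_sq_gaussianC : Integrable (fun w : ℂ => ‖w‖ ^ 2) gaussianC :=
  .of_integral_ne_zero (by rw [integral_norm_sq_gaussianC]; exact one_ne_zero)

lemma integral_mem_Icc_of_le_of_le {α : Type*} [MeasurableSpace α] {μ : Measure α}
    [IsProbabilityMeasure μ] {f lo : α → ℝ} {hi : ℝ} (hf : AEStronglyMeasurable f μ)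
    (hlo_int : Integrable lo μ) (hlo : ∀ a, lo a ≤ f a) (hhi : ∀ a, f a ≤ hi) :
    ∫ a, f a ∂μ ∈ Set.Icc (∫ a, lo a ∂μ) hi := by
  have hf_int : Integrable f μ :=
    integrable_of_le_of_le hf (.of_forall hlo) (.of_forall hhi) hlo_int (integrable_const hi)
  refine ⟨integral_mono hlo_int hf_int hlo, ?_⟩
  simpa using integral_mono hf_int (integrable_const hi) hhi

section likelihoodSum

variable {M : ℕ} (x : Fin M → ℂ) (σ s : ℝ) (i : Fin M) (w : ℂ)

noncomputable def likelihoodSum : ℝ :=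
  ∑ j : Fin M, rexp (-‖(σ : ℂ) * w + (√s : ℂ) * (x i - x j)‖ ^ 2 / σ ^ 2)

lemma g_eq_integral_logb_likelihoodSum :
    g M x σ s i = ∫ w, logb 2 (likelihoodSum x σ s i w) ∂gaussianC :=
  rfl

lemma likelihoodSum_le_card : likelihoodSum x σ s i w ≤ M := by
  calc likelihoodSum x σ s i w ≤ ∑ _j : Fin M, (1 : ℝ) :=
        Finset.sum_le_sum fun j _ => exp_le_one_iff.mpr
          (div_nonpos_of_nonpos_of_nonneg (neg_nonpos.mpr (by positivity)) (by positivity))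
    _ = M := by simp

variable {σ} in
lemma exp_neg_norm_sq_le_likelihoodSum (hσ : σ ≠ 0) :
    rexp (-‖w‖ ^ 2) ≤ likelihoodSum x σ s i w := by
  have diagonal_term :
      rexp (-‖(σ : ℂ) * w + (√s : ℂ) * (x i - x i)‖ ^ 2 / σ ^ 2) = rexp (-‖w‖ ^ 2) := by
    rw [sub_self, mul_zero, add_zero, norm_mul, Complex.norm_real, norm_eq_abs, mul_pow, sq_abs]
    field_simp
  rw [← diagonal_term]
  exact Finset.single_le_sum
    (f := fun j => rexp (-‖(σ : ℂ) * w + (√s : ℂ) * (x i - x j)‖ ^ 2 / σ ^ 2))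
    (fun j _ => (exp_pos _).le) (Finset.mem_univ i)

lemma measurable_logb_likelihoodSum :
    Measurable fun w => logb 2 (likelihoodSum x σ s i w) := by
  unfold likelihoodSum logb
  fun_prop

end likelihoodSum

theorem g_bounds_general (M : ℕ) (x : Fin M → ℂ)
    (σ : ℝ) (hσ : 0 < σ) (s : ℝ) (i : Fin M) :
    -(Real.logb 2 (Real.exp 1)) ≤ g M x σ s i ∧ g M x σ s i ≤ Real.logb 2 M := by
  have hlo : ∀ w, -‖w‖ ^ 2 / log 2 ≤ logb 2 (likelihoodSum x σ s i w) := fun w => by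
    rw [← log_exp (-‖w‖ ^ 2), ← logb]
    exact logb_le_logb_of_le one_lt_two (exp_pos _)
      (exp_neg_norm_sq_le_likelihoodSum x s i w hσ.ne')
  have hhi : ∀ w, logb 2 (likelihoodSum x σ s i w) ≤ logb 2 M := fun w =>
    logb_le_logb_of_le one_lt_two ((exp_pos _).trans_le
      (exp_neg_norm_sq_le_likelihoodSum x s i w hσ.ne')) (likelihoodSum_le_card x σ s i w)
  obtain ⟨hg_lo, hg_hi⟩ :=
    integral_mem_Icc_of_le_of_le (lo := fun w => -‖w‖ ^ 2 / log 2)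
    (measurable_logb_likelihoodSum x σ s i).aestronglyMeasurable
    (integrable_norm_sq_gaussianC.neg.div_const _) hlo hhi
  rw [integral_div, integral_neg, integral_norm_sq_gaussianC] at hg_lo
  rw [g_eq_integral_logb_likelihoodSum, logb, log_exp, ← neg_div]
  exact ⟨hg_lo, hg_hi⟩

theorem g_bounds (M : ℕ) (hM : 1 ≤ M) (x : Fin M → ℂ)
    (σ : ℝ) (hσ : 0 < σ) (s : ℝ) (hs : 0 ≤ s) (i : Fin M) :
    -(Real.logb 2 (Real.exp 1)) ≤ g M x σ s i ∧ g M x σ s i ≤ Real.logb 2 M :=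
  g_bounds_general M x σ hσ s i
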